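/- Let β = (61 - √385)/24 and c = E_1(α/β) where α = (27 - √385)/8 and E_1(x) = (2 + 2x)/4. If 3c(β - 1) < (2/β)^m holds for some natural number m, and c·β^m < (2^m + 2)/3, then c·β^{m+1} < (2^{m+1} + 2)/3. -/
import Mathlib


noncomputable def β : ℝ := (61 - Real.sqrt 385) / 24

noncomputable def α : ℝ := (27 - Real.sqrt 385) / 8

noncomputable def c : ℝ := (2 + 2 * (α / β)) / 4

theorem violation_induction_step (m : ℕ)
    (h1 : 3 * c * (β - 1) < (2 / β) ^ m)
    (h2 : c * β ^ m < (2 ^ m + 2) / 3) :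
    c * β ^ (m + 1) < (2 ^ (m + 1) + 2) / 3 := by
  have hs : Real.sqrt 385 < 20 := by
    have : (385:ℝ) < 20 ^ 2 := by norm_num
    nlinarith [Real.sq_sqrt (by norm_num : (385:ℝ) ≥ 0), Real.sqrt_nonneg 385]
  have hb : (1:ℝ) < β := by unfold β; linarith
  have hp : (0:ℝ) < β ^ m := pow_pos (by linarith) m
  rw [div_pow] at h1
  have key : 3 * c * (β - 1) * β ^ m < 2 ^ m := by
    have := (lt_div_iff₀ hp).mp h1
    linarith
  rw [pow_succ, pow_succ]
  nlinarith [key, h2]
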